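/- arXiv:1805.11020 — 2 statements merged into one kernel-verified Lean document; each statement's English description precedes it below -/
import Mathlib

section
/- With the bilinear form a as in the SIEQ weak formulation, for any (φ, u) ∈ H¹(Ω) × H¹(Ω) one has a((φ,u),(φ,u)) = (3/(2δt))‖√τ⋆ φ‖² + (S₁/ε²)‖φ‖² + S₂‖∇φ‖² + (1/2)‖Z⋆φ‖² + (λ/(εK))‖u‖² + (2δt/3)(λD/(εK))‖∇u‖²; in particular the coupling terms ±(λ/ε)(p⋆·,·) cancel exactly and a((φ,u),(φ,u)) ≥ C₂(‖φ‖²_{H¹} + ‖u‖²_{H¹}) with C₂ = min{S₁/ε², S₂, λ/(εK), (2δt/3)(λD/(εK))} > 0. -/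
open MeasureTheory
open scoped RealInnerProductSpace

/-! The two coupling integrals have the same integrand up to the order of the factors, so they
cancel on the diagonal. What remains is a sum of nonnegative weighted squared L² norms, in which
each of the four H¹ pieces carries a weight at least `C₂`. -/

lemma min_min_mul_add_add_le {c₁ c₂ c₃ c₄ a₁ a₂ a₃ a₄ : ℝ}
    (ha₁ : 0 ≤ a₁) (ha₂ : 0 ≤ a₂) (ha₃ : 0 ≤ a₃) (ha₄ : 0 ≤ a₄) :
    min (min c₁ c₂) (min c₃ c₄) * ((a₁ + a₂) + (a₃ + a₄))
      ≤ c₁ * a₁ + c₂ * a₂ + c₃ * a₃ + c₄ * a₄ := by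
  set m := min (min c₁ c₂) (min c₃ c₄)
  have h₁ : m * a₁ ≤ c₁ * a₁ := by gcongr; exact (min_le_left _ _).trans (min_le_left _ _)
  have h₂ : m * a₂ ≤ c₂ * a₂ := by gcongr; exact (min_le_left _ _).trans (min_le_right _ _)
  have h₃ : m * a₃ ≤ c₃ * a₃ := by gcongr; exact (min_le_right _ _).trans (min_le_left _ _)
  have h₄ : m * a₄ ≤ c₄ * a₄ := by gcongr; exact (min_le_right _ _).trans (min_le_right _ _)
  linarith

section Integrals

variable {Ω : Type*} [MeasurableSpace Ω] (μ : Measure Ω)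

lemma integral_mul_mul_self (w f : Ω → ℝ) :
    ∫ x, w x * f x * f x ∂μ = ∫ x, w x * f x ^ 2 ∂μ := by
  simp only [mul_assoc, ← pow_two]

lemma integral_mul_self (f : Ω → ℝ) : ∫ x, f x * f x ∂μ = ∫ x, f x ^ 2 ∂μ := by
  simp only [← pow_two]

lemma integral_inner_self {E : Type*} [NormedAddCommGroup E] [InnerProductSpace ℝ E]
    (g : Ω → E) : ∫ x, ⟪g x, g x⟫ ∂μ = ∫ x, ‖g x‖ ^ 2 ∂μ := by
  simp only [real_inner_self_eq_norm_sq]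

lemma integral_sq_nonneg (f : Ω → ℝ) : 0 ≤ ∫ x, f x ^ 2 ∂μ :=
  integral_nonneg fun _ => sq_nonneg _

end Integrals

theorem sieq_bilinear_form_coercive_general
    {Ω : Type*} [MeasurableSpace Ω] (μ : Measure Ω) (d : ℕ)
    (τs Zs ps : Ω → ℝ)
    (hτ : ∀ x, 0 ≤ τs x)
    (δt S₁ S₂ ε lam D K : ℝ)
    (hδt : 0 < δt) (hS₁ : 0 < S₁) (hS₂ : 0 < S₂) (hε : 0 < ε)
    (hlam : 0 < lam) (hD : 0 < D) (hK : 0 < K)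
    (φ u : Ω → ℝ) (gφ gu : Ω → EuclideanSpace ℝ (Fin d)) :
    ((3/(2*δt)) * ∫ x, τs x * φ x * φ x ∂μ
      + (S₁/ε^2) * ∫ x, φ x * φ x ∂μ
      + S₂ * ∫ x, ⟪gφ x, gφ x⟫ ∂μ
      + (1/2) * ∫ x, (Zs x * φ x) * (Zs x * φ x) ∂μ
      + (lam/ε) * ∫ x, ps x * u x * φ x ∂μ
      + (lam/(ε*K)) * ∫ x, u x * u x ∂μ
      + (2*δt/3) * (lam*D/(ε*K)) * ∫ x, ⟪gu x, gu x⟫ ∂μ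
      - (lam/ε) * ∫ x, ps x * φ x * u x ∂μ)
    = (3/(2*δt)) * (∫ x, τs x * (φ x)^2 ∂μ)
      + (S₁/ε^2) * (∫ x, (φ x)^2 ∂μ) + S₂ * (∫ x, ‖gφ x‖^2 ∂μ)
      + (1/2) * (∫ x, (Zs x * φ x)^2 ∂μ)
      + (lam/(ε*K)) * (∫ x, (u x)^2 ∂μ)
      + (2*δt/3) * (lam*D/(ε*K)) * (∫ x, ‖gu x‖^2 ∂μ) ∧
    min (min (S₁/ε^2) S₂) (min (lam/(ε*K)) ((2*δt/3) * (lam*D/(ε*K))))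
        * (((∫ x, (φ x)^2 ∂μ) + ∫ x, ‖gφ x‖^2 ∂μ)
           + ((∫ x, (u x)^2 ∂μ) + ∫ x, ‖gu x‖^2 ∂μ))
      ≤ ((3/(2*δt)) * ∫ x, τs x * φ x * φ x ∂μ
          + (S₁/ε^2) * ∫ x, φ x * φ x ∂μ
          + S₂ * ∫ x, ⟪gφ x, gφ x⟫ ∂μ
          + (1/2) * ∫ x, (Zs x * φ x) * (Zs x * φ x) ∂μ
          + (lam/ε) * ∫ x, ps x * u x * φ x ∂μ
          + (lam/(ε*K)) * ∫ x, u x * u x ∂μ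
          + (2*δt/3) * (lam*D/(ε*K)) * ∫ x, ⟪gu x, gu x⟫ ∂μ
          - (lam/ε) * ∫ x, ps x * φ x * u x ∂μ) ∧
    0 < min (min (S₁/ε^2) S₂) (min (lam/(ε*K)) ((2*δt/3) * (lam*D/(ε*K)))) := by
  have hcoupling : ∫ x, ps x * u x * φ x ∂μ = ∫ x, ps x * φ x * u x ∂μ := by
    simp only [mul_right_comm (ps _)]
  rw [hcoupling, integral_mul_mul_self, integral_mul_self μ φ, integral_mul_self μ u,
    integral_mul_self μ (fun x => Zs x * φ x), integral_inner_self, integral_inner_self]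
  refine ⟨by ring, ?_, by positivity⟩
  have hτφ : 0 ≤ 3 / (2 * δt) * ∫ x, τs x * φ x ^ 2 ∂μ :=
    mul_nonneg (by positivity) (integral_nonneg fun x => mul_nonneg (hτ x) (sq_nonneg _))
  have hZφ : 0 ≤ ∫ x, (Zs x * φ x) ^ 2 ∂μ := integral_sq_nonneg μ _
  have hH1 := min_min_mul_add_add_le (c₁ := S₁ / ε ^ 2) (c₂ := S₂) (c₃ := lam / (ε * K))
    (c₄ := 2 * δt / 3 * (lam * D / (ε * K))) (integral_sq_nonneg μ φ)
    (integral_sq_nonneg μ (‖gφ ·‖)) (integral_sq_nonneg μ u) (integral_sq_nonneg μ (‖gu ·‖))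
  linarith

/-- Coercivity (Theorem 3.1(ii)) of the SIEQ bilinear form: on the diagonal the
coupling terms `±(λ/ε)(p⋆·,·)` cancel exactly, giving
`a((φ,u),(φ,u)) = (3/(2δt))‖√τ⋆φ‖² + (S₁/ε²)‖φ‖² + S₂‖∇φ‖² + (1/2)‖Z⋆φ‖²
+ (λ/(εK))‖u‖² + (2δt/3)(λD/(εK))‖∇u‖² ≥ C₂(‖φ‖²_{H¹} + ‖u‖²_{H¹})` with
`C₂ = min{S₁/ε², S₂, λ/(εK), (2δt/3)(λD/(εK))} > 0`. -/
theorem sieq_bilinear_form_coercive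
    {Ω : Type*} [MeasurableSpace Ω] (μ : Measure Ω) (d : ℕ)
    (τs Zs ps : Ω → ℝ) (MZ Mp : ℝ)
    (hτ : ∀ x, 0 ≤ τs x) (hZ : ∀ x, |Zs x| ≤ MZ) (hp : ∀ x, |ps x| ≤ Mp)
    (hτm : Measurable τs) (hZm : Measurable Zs) (hpm : Measurable ps)
    (δt S₁ S₂ ε lam D K : ℝ)
    (hδt : 0 < δt) (hS₁ : 0 < S₁) (hS₂ : 0 < S₂) (hε : 0 < ε)
    (hlam : 0 < lam) (hD : 0 < D) (hK : 0 < K)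
    (hτb : ∃ Mτ, ∀ x, τs x ≤ Mτ)
    (φ u : Ω → ℝ) (gφ gu : Ω → EuclideanSpace ℝ (Fin d))
    (hφ : MemLp φ 2 μ) (hu : MemLp u 2 μ)
    (hgφ : MemLp gφ 2 μ) (hgu : MemLp gu 2 μ) :
    ((3/(2*δt)) * ∫ x, τs x * φ x * φ x ∂μ
      + (S₁/ε^2) * ∫ x, φ x * φ x ∂μ
      + S₂ * ∫ x, ⟪gφ x, gφ x⟫ ∂μ
      + (1/2) * ∫ x, (Zs x * φ x) * (Zs x * φ x) ∂μ
      + (lam/ε) * ∫ x, ps x * u x * φ x ∂μ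
      + (lam/(ε*K)) * ∫ x, u x * u x ∂μ
      + (2*δt/3) * (lam*D/(ε*K)) * ∫ x, ⟪gu x, gu x⟫ ∂μ
      - (lam/ε) * ∫ x, ps x * φ x * u x ∂μ)
    = (3/(2*δt)) * (∫ x, τs x * (φ x)^2 ∂μ)
      + (S₁/ε^2) * (∫ x, (φ x)^2 ∂μ) + S₂ * (∫ x, ‖gφ x‖^2 ∂μ)
      + (1/2) * (∫ x, (Zs x * φ x)^2 ∂μ)
      + (lam/(ε*K)) * (∫ x, (u x)^2 ∂μ)
      + (2*δt/3) * (lam*D/(ε*K)) * (∫ x, ‖gu x‖^2 ∂μ) ∧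
    min (min (S₁/ε^2) S₂) (min (lam/(ε*K)) ((2*δt/3) * (lam*D/(ε*K))))
        * (((∫ x, (φ x)^2 ∂μ) + ∫ x, ‖gφ x‖^2 ∂μ)
           + ((∫ x, (u x)^2 ∂μ) + ∫ x, ‖gu x‖^2 ∂μ))
      ≤ ((3/(2*δt)) * ∫ x, τs x * φ x * φ x ∂μ
          + (S₁/ε^2) * ∫ x, φ x * φ x ∂μ
          + S₂ * ∫ x, ⟪gφ x, gφ x⟫ ∂μ
          + (1/2) * ∫ x, (Zs x * φ x) * (Zs x * φ x) ∂μ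
          + (lam/ε) * ∫ x, ps x * u x * φ x ∂μ
          + (lam/(ε*K)) * ∫ x, u x * u x ∂μ
          + (2*δt/3) * (lam*D/(ε*K)) * ∫ x, ⟪gu x, gu x⟫ ∂μ
          - (lam/ε) * ∫ x, ps x * φ x * u x ∂μ) ∧
    0 < min (min (S₁/ε^2) S₂) (min (lam/(ε*K)) ((2*δt/3) * (lam*D/(ε*K)))) :=
  sieq_bilinear_form_coercive_general μ d τs Zs ps hτ δt S₁ S₂ ε lam D K hδt hS₁ hS₂ hε hlam hD hK φ
    u gφ gu
end

section
/- Suppose the three discrete equations of the SIEQ scheme hold: (i) τ⋆·(3φ^{n+1}−4φ^n+φ^{n−1})/(2δt) + (S₁/ε²)(φ^{n+1}−2φ^n+φ^{n−1}) − S₂Δ(φ^{n+1}−2φ^n+φ^{n−1}) = −Z⋆U^{n+1} − (λ/ε)p⋆u^{n+1}; (ii) 3U^{n+1}−4U^n+U^{n−1} = (1/2)Z⋆(3φ^{n+1}−4φ^n+φ^{n−1}); (iii) (3u^{n+1}−4u^n+u^{n−1})/(2δt) − DΔu^{n+1} = Kp⋆(3φ^{n+1}−4φ^n+φ^{n−1})/(2δt),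 with periodic boundary conditions. Then E^{n+1}_bdf2 − E^n_bdf2 ≤ −δt‖√τ⋆ (3φ^{n+1}−4φ^n+φ^{n−1})/(2δt)‖² − δt(λD/(εK))‖∇u^{n+1}‖² ≤ 0, where E^{n+1}_bdf2 = (‖U^{n+1}‖²+‖2U^{n+1}−U^n‖²)/2 + (λ/(2εK))(‖u^{n+1}‖²+‖2u^{n+1}−u^n‖²)/2 + (S₁/(2ε²))‖φ^{n+1}−φ^n‖² + (S₂/2)‖∇(φ^{n+1}−φ^n)‖². -/
/-!
Test the three equations of the scheme with `(3φ^{n+1} - 4φⁿ + φ^{n-1})/2`, `U^{n+1}` and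
`δt λ/(εK) u^{n+1}` and add them: the coupling terms `Z⋆U^{n+1}` and `p⋆u^{n+1}` cancel, leaving the
`τ⋆` term and the dissipation `‖∇u^{n+1}‖²` (after integration by parts). The BDF2 identities turn
every remaining product into a difference of consecutive energies plus a nonnegative remainder,
which is dropped.
-/

open MeasureTheory
open scoped RealInnerProductSpace

theorem inner_bdf2_stab_eq {E : Type*} [NormedAddCommGroup E] [InnerProductSpace ℝ E]
    (a b c : E) :
    ⟪a - 2 • b + c, 3 • a - 4 • b + c⟫ = ‖a - b‖ ^ 2 - ‖b - c‖ ^ 2 + 2 * ‖a - 2 • b + c‖ ^ 2 := by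
  simp only [← Nat.cast_smul_eq_nsmul ℝ, Nat.cast_ofNat, inner_add_left, inner_add_right,
    inner_sub_left, inner_sub_right, real_inner_smul_left, real_inner_smul_right,
    ← real_inner_self_eq_norm_sq, real_inner_comm a b, real_inner_comm a c, real_inner_comm b c]
  ring

section
variable {Ω : Type*} [MeasurableSpace Ω] {μ : Measure Ω}

theorem integral_inner_bdf2_stab_ge {E : Type*} [NormedAddCommGroup E] [InnerProductSpace ℝ E]
    {f g h : Ω → E} (hf : MemLp f 2 μ) (hg : MemLp g 2 μ) (hh : MemLp h 2 μ) :
    (∫ x, ‖f x - g x‖ ^ 2 ∂μ) - ∫ x, ‖g x - h x‖ ^ 2 ∂μ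
      ≤ ∫ x, ⟪f x - 2 • g x + h x, 3 • f x - 4 • g x + h x⟫ ∂μ := by
  have hfg := (hf.sub hg).norm.integrable_sq
  have hgh := (hg.sub hh).norm.integrable_sq
  have hψ : Integrable (fun x => ‖f x - 2 • g x + h x‖ ^ 2) μ := by
    have h2g : MemLp (fun x => 2 • g x) 2 μ := by
      simp only [two_nsmul]; exact hg.add hg
    exact ((hf.sub h2g).add hh).norm.integrable_sq
  calc (∫ x, ‖f x - g x‖ ^ 2 ∂μ) - ∫ x, ‖g x - h x‖ ^ 2 ∂μ
      = ∫ x, ‖f x - g x‖ ^ 2 - ‖g x - h x‖ ^ 2 ∂μ := (integral_sub hfg hgh).symm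
    _ ≤ ∫ x, ‖f x - g x‖ ^ 2 - ‖g x - h x‖ ^ 2 + 2 * ‖f x - 2 • g x + h x‖ ^ 2 ∂μ :=
      integral_mono (hfg.sub hgh) ((hfg.sub hgh).add (hψ.const_mul 2)) fun x => by
        simp only [le_add_iff_nonneg_right]; positivity
    _ = _ := by simp only [inner_bdf2_stab_eq]

theorem integral_mul_bdf2_stab_ge {a b c : Ω → ℝ} (ha : MemLp a 2 μ) (hb : MemLp b 2 μ)
    (hc : MemLp c 2 μ) :
    (∫ x, (a x - b x) ^ 2 ∂μ) - ∫ x, (b x - c x) ^ 2 ∂μ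
      ≤ ∫ x, (a x - 2 * b x + c x) * (3 * a x - 4 * b x + c x) ∂μ := by
  simpa [nsmul_eq_mul, mul_comm] using integral_inner_bdf2_stab_ge ha hb hc

theorem integral_mul_bdf2_ge {a b c : Ω → ℝ} (ha : MemLp a 2 μ) (hb : MemLp b 2 μ)
    (hc : MemLp c 2 μ) :
    ((∫ x, a x ^ 2 ∂μ) + ∫ x, (2 * a x - b x) ^ 2 ∂μ) / 2
      - ((∫ x, b x ^ 2 ∂μ) + ∫ x, (2 * b x - c x) ^ 2 ∂μ) / 2
      ≤ ∫ x, a x * (3 * a x - 4 * b x + c x) ∂μ := by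
  have := ha.integrable_sq
  have : Integrable (fun x => (2 * a x - b x) ^ 2) μ := ((ha.const_mul 2).sub hb).integrable_sq
  have := hb.integrable_sq
  have : Integrable (fun x => (2 * b x - c x) ^ 2) μ := ((hb.const_mul 2).sub hc).integrable_sq
  have : Integrable (fun x => (a x - 2 * b x + c x) ^ 2) μ :=
    ((ha.sub (hb.const_mul 2)).add hc).integrable_sq
  calc _ = ∫ x, ((a x ^ 2 + (2 * a x - b x) ^ 2) - (b x ^ 2 + (2 * b x - c x) ^ 2)) / 2 ∂μ := by
        simp (disch := fun_prop) only [integral_div, integral_sub, integral_add]; ring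
    _ ≤ ∫ x, ((a x ^ 2 + (2 * a x - b x) ^ 2) - (b x ^ 2 + (2 * b x - c x) ^ 2)) / 2
          + (a x - 2 * b x + c x) ^ 2 / 2 ∂μ :=
      integral_mono (by fun_prop) (by fun_prop) fun x => by
        simp only [le_add_iff_nonneg_right]; positivity
    _ = _ := integral_congr_ae (ae_of_all μ fun x => by ring)

end

theorem sieq_pointwise_energy_balance {δt ε K S₁ S₂ lam D τ Z p χ ψ U BU u Bu Ls Lu : ℝ}
    (hδt : δt ≠ 0) (hK : K ≠ 0)
    (h₁ : τ * (χ / (2 * δt)) + (S₁ / ε ^ 2) * ψ - S₂ * Ls = -Z * U - (lam / ε) * p * u)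
    (h₂ : BU = (1 / 2) * Z * χ)
    (h₃ : Bu / (2 * δt) - D * Lu = K * p * (χ / (2 * δt))) :
    δt * (τ * (χ / (2 * δt)) ^ 2)
      = -(S₁ / (2 * ε ^ 2)) * (ψ * χ) + (S₂ / 2) * (Ls * χ) - U * BU
        - (lam / (2 * ε * K)) * (u * Bu) + (δt * lam * D / (ε * K)) * (Lu * u) := by
  have hp : p * χ = Bu / K - 2 * δt * D * Lu / K := by
    field_simp at h₃ ⊢; linarith
  have hq : δt * (χ / (2 * δt)) = χ / 2 := by field_simp
  linear_combination (δt * (χ / (2 * δt))) * h₁ + U * h₂ - (lam * u / (2 * ε)) * hp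
    + (-(S₁ / ε ^ 2) * ψ + S₂ * Ls - Z * U - (lam / ε) * p * u) * hq

/-- `φ2, φ1, φ0` stand for `φ^{n+1}, φⁿ, φ^{n-1}` (likewise `u`, `U`), `gφi` and `gu2` for their
gradients, `Lstab` for `Δ(φ^{n+1} - 2φⁿ + φ^{n-1})` and `Lu2` for `Δu^{n+1}`; periodicity enters only
through the two integration-by-parts identities. -/
theorem sieq_unconditional_energy_stability_general
    {Ω : Type*} [MeasurableSpace Ω] (μ : Measure Ω) (d : ℕ)
    (δt S₁ S₂ ε lam D K : ℝ)
    (hδt : 0 < δt) (hS₁ : 0 < S₁) (hS₂ : 0 < S₂) (hε : 0 < ε)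
    (hlam : 0 < lam) (hD : 0 < D) (hK : 0 < K)
    (τs Zs ps : Ω → ℝ) (hτ : ∀ x, 0 ≤ τs x)
    (φ2 φ1 φ0 u2 u1 u0 U2 U1 U0 Lstab Lu2 : Ω → ℝ)
    (gφ2 gφ1 gφ0 gu2 : Ω → EuclideanSpace ℝ (Fin d))
    -- square-integrability of all quantities:
    (hφ2 : MemLp φ2 2 μ) (hφ1 : MemLp φ1 2 μ) (hφ0 : MemLp φ0 2 μ)
    (hu2 : MemLp u2 2 μ) (hu1 : MemLp u1 2 μ) (hu0 : MemLp u0 2 μ)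
    (hU2 : MemLp U2 2 μ) (hU1 : MemLp U1 2 μ) (hU0 : MemLp U0 2 μ)
    (hgφ2 : MemLp gφ2 2 μ) (hgφ1 : MemLp gφ1 2 μ) (hgφ0 : MemLp gφ0 2 μ)
    (hLs : MemLp Lstab 2 μ) (hLu : MemLp Lu2 2 μ)
    -- the discrete SIEQ scheme (3.12)-(3.14), pointwise:
    (heq1 : ∀ x, τs x * ((3*φ2 x - 4*φ1 x + φ0 x)/(2*δt))
        + (S₁/ε^2) * (φ2 x - 2*φ1 x + φ0 x) - S₂ * Lstab x
        = -(Zs x) * U2 x - (lam/ε) * ps x * u2 x)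
    (heq2 : ∀ x, 3*U2 x - 4*U1 x + U0 x
        = (1/2) * Zs x * (3*φ2 x - 4*φ1 x + φ0 x))
    (heq3 : ∀ x, (3*u2 x - 4*u1 x + u0 x)/(2*δt) - D * Lu2 x
        = K * ps x * ((3*φ2 x - 4*φ1 x + φ0 x)/(2*δt)))
    -- periodic integration by parts for the two Laplacian terms:
    (hIBP1 : (∫ x, Lstab x * (3*φ2 x - 4*φ1 x + φ0 x) ∂μ)
        = -∫ x, ⟪gφ2 x - 2 • gφ1 x + gφ0 x, 3 • gφ2 x - 4 • gφ1 x + gφ0 x⟫ ∂μ)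
    (hIBP2 : (∫ x, Lu2 x * u2 x ∂μ) = -∫ x, ‖gu2 x‖^2 ∂μ) :
    ((((∫ x, (U2 x)^2 ∂μ) + ∫ x, (2*U2 x - U1 x)^2 ∂μ)/2
       + (lam/(2*ε*K)) * (((∫ x, (u2 x)^2 ∂μ) + ∫ x, (2*u2 x - u1 x)^2 ∂μ)/2)
       + (S₁/(2*ε^2)) * (∫ x, (φ2 x - φ1 x)^2 ∂μ)
       + (S₂/2) * (∫ x, ‖gφ2 x - gφ1 x‖^2 ∂μ))
     - (((∫ x, (U1 x)^2 ∂μ) + ∫ x, (2*U1 x - U0 x)^2 ∂μ)/2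
       + (lam/(2*ε*K)) * (((∫ x, (u1 x)^2 ∂μ) + ∫ x, (2*u1 x - u0 x)^2 ∂μ)/2)
       + (S₁/(2*ε^2)) * (∫ x, (φ1 x - φ0 x)^2 ∂μ)
       + (S₂/2) * (∫ x, ‖gφ1 x - gφ0 x‖^2 ∂μ))
     ≤ -δt * (∫ x, τs x * ((3*φ2 x - 4*φ1 x + φ0 x)/(2*δt))^2 ∂μ)
        - δt * (lam*D/(ε*K)) * ∫ x, ‖gu2 x‖^2 ∂μ) ∧
    (-δt * (∫ x, τs x * ((3*φ2 x - 4*φ1 x + φ0 x)/(2*δt))^2 ∂μ)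
        - δt * (lam*D/(ε*K)) * ∫ x, ‖gu2 x‖^2 ∂μ ≤ 0) := by
  have hχ : MemLp (fun x => 3 * φ2 x - 4 * φ1 x + φ0 x) 2 μ :=
    ((hφ2.const_mul 3).sub (hφ1.const_mul 4)).add hφ0
  have hbalance : δt * ∫ x, τs x * ((3*φ2 x - 4*φ1 x + φ0 x)/(2*δt))^2 ∂μ
      = -(S₁ / (2 * ε ^ 2)) * (∫ x, (φ2 x - 2*φ1 x + φ0 x) * (3*φ2 x - 4*φ1 x + φ0 x) ∂μ)
        + (S₂ / 2) * (∫ x, Lstab x * (3*φ2 x - 4*φ1 x + φ0 x) ∂μ)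
        - (∫ x, U2 x * (3*U2 x - 4*U1 x + U0 x) ∂μ)
        - (lam / (2 * ε * K)) * (∫ x, u2 x * (3*u2 x - 4*u1 x + u0 x) ∂μ)
        + (δt * lam * D / (ε * K)) * (∫ x, Lu2 x * u2 x ∂μ) := by
    have : Integrable (fun x => (φ2 x - 2*φ1 x + φ0 x) * (3*φ2 x - 4*φ1 x + φ0 x)) μ :=
      ((hφ2.sub (hφ1.const_mul 2)).add hφ0).integrable_mul hχ
    have : Integrable (fun x => Lstab x * (3*φ2 x - 4*φ1 x + φ0 x)) μ := hLs.integrable_mul hχ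
    have : Integrable (fun x => U2 x * (3*U2 x - 4*U1 x + U0 x)) μ :=
      hU2.integrable_mul (((hU2.const_mul 3).sub (hU1.const_mul 4)).add hU0)
    have : Integrable (fun x => u2 x * (3*u2 x - 4*u1 x + u0 x)) μ :=
      hu2.integrable_mul (((hu2.const_mul 3).sub (hu1.const_mul 4)).add hu0)
    have : Integrable (fun x => Lu2 x * u2 x) μ := hLu.integrable_mul hu2
    rw [← integral_const_mul, integral_congr_ae (ae_of_all μ fun x =>
      sieq_pointwise_energy_balance hδt.ne' hK.ne' (heq1 x) (heq2 x) (heq3 x))]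
    simp (disch := fun_prop) only [integral_add, integral_sub, integral_const_mul]
  have hφ := integral_mul_bdf2_stab_ge hφ2 hφ1 hφ0
  have hgφ := integral_inner_bdf2_stab_ge hgφ2 hgφ1 hgφ0
  have hU := integral_mul_bdf2_ge hU2 hU1 hU0
  have hu := integral_mul_bdf2_ge hu2 hu1 hu0
  have hτφ : 0 ≤ ∫ x, τs x * ((3*φ2 x - 4*φ1 x + φ0 x)/(2*δt))^2 ∂μ :=
    integral_nonneg fun x => mul_nonneg (hτ x) (sq_nonneg _)
  have hgu : 0 ≤ ∫ x, ‖gu2 x‖^2 ∂μ := integral_nonneg fun x => sq_nonneg _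
  constructor
  · linear_combination hbalance + (S₁ / (2 * ε ^ 2)) * hφ + (S₂ / 2) * hgφ + hU
      + (lam / (2 * ε * K)) * hu + (S₂ / 2) * hIBP1 + (δt * lam * D / (ε * K)) * hIBP2
  · linear_combination δt * hτφ + (δt * (lam * D / (ε * K))) * hgu

/-- Theorem 3.2: unconditional energy stability of the SIEQ scheme. `φ2, φ1, φ0`
stand for `φ^{n+1}, φⁿ, φ^{n-1}` (similarly for `u`, `U`), `gφi`/`gu2` are their
gradients, `Lstab = Δ(φ^{n+1} - 2φⁿ + φ^{n-1})` and `Lu2 = Δu^{n+1}` with the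
periodic integration-by-parts identities as hypotheses.  If the three discrete
equations (3.12)-(3.14) hold pointwise, then
`E^{n+1}_bdf2 - E^n_bdf2 ≤ -δt‖√τ⋆(3φ^{n+1}-4φⁿ+φ^{n-1})/(2δt)‖²
 - δt(λD/(εK))‖∇u^{n+1}‖² ≤ 0`. -/
theorem sieq_unconditional_energy_stability
    {Ω : Type*} [MeasurableSpace Ω] (μ : Measure Ω) [IsFiniteMeasure μ] (d : ℕ)
    (δt S₁ S₂ ε lam D K : ℝ)
    (hδt : 0 < δt) (hS₁ : 0 < S₁) (hS₂ : 0 < S₂) (hε : 0 < ε)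
    (hlam : 0 < lam) (hD : 0 < D) (hK : 0 < K)
    (τs Zs ps : Ω → ℝ) (hτ : ∀ x, 0 ≤ τs x)
    (Mτ MZ Mp : ℝ) (hτb : ∀ x, τs x ≤ Mτ) (hZb : ∀ x, |Zs x| ≤ MZ)
    (hpb : ∀ x, |ps x| ≤ Mp)
    (φ2 φ1 φ0 u2 u1 u0 U2 U1 U0 Lstab Lu2 : Ω → ℝ)
    (gφ2 gφ1 gφ0 gu2 : Ω → EuclideanSpace ℝ (Fin d))
    -- square-integrability of all quantities:
    (hφ2 : MemLp φ2 2 μ) (hφ1 : MemLp φ1 2 μ) (hφ0 : MemLp φ0 2 μ)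
    (hu2 : MemLp u2 2 μ) (hu1 : MemLp u1 2 μ) (hu0 : MemLp u0 2 μ)
    (hU2 : MemLp U2 2 μ) (hU1 : MemLp U1 2 μ) (hU0 : MemLp U0 2 μ)
    (hgφ2 : MemLp gφ2 2 μ) (hgφ1 : MemLp gφ1 2 μ) (hgφ0 : MemLp gφ0 2 μ)
    (hgu2 : MemLp gu2 2 μ)
    (hLs : MemLp Lstab 2 μ) (hLu : MemLp Lu2 2 μ)
    -- the discrete SIEQ scheme (3.12)-(3.14), pointwise:
    (heq1 : ∀ x, τs x * ((3*φ2 x - 4*φ1 x + φ0 x)/(2*δt))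
        + (S₁/ε^2) * (φ2 x - 2*φ1 x + φ0 x) - S₂ * Lstab x
        = -(Zs x) * U2 x - (lam/ε) * ps x * u2 x)
    (heq2 : ∀ x, 3*U2 x - 4*U1 x + U0 x
        = (1/2) * Zs x * (3*φ2 x - 4*φ1 x + φ0 x))
    (heq3 : ∀ x, (3*u2 x - 4*u1 x + u0 x)/(2*δt) - D * Lu2 x
        = K * ps x * ((3*φ2 x - 4*φ1 x + φ0 x)/(2*δt)))
    -- periodic integration by parts for the two Laplacian terms:
    (hIBP1 : (∫ x, Lstab x * (3*φ2 x - 4*φ1 x + φ0 x) ∂μ)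
        = -∫ x, ⟪gφ2 x - 2 • gφ1 x + gφ0 x, 3 • gφ2 x - 4 • gφ1 x + gφ0 x⟫ ∂μ)
    (hIBP2 : (∫ x, Lu2 x * u2 x ∂μ) = -∫ x, ‖gu2 x‖^2 ∂μ) :
    ((((∫ x, (U2 x)^2 ∂μ) + ∫ x, (2*U2 x - U1 x)^2 ∂μ)/2
       + (lam/(2*ε*K)) * (((∫ x, (u2 x)^2 ∂μ) + ∫ x, (2*u2 x - u1 x)^2 ∂μ)/2)
       + (S₁/(2*ε^2)) * (∫ x, (φ2 x - φ1 x)^2 ∂μ)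
       + (S₂/2) * (∫ x, ‖gφ2 x - gφ1 x‖^2 ∂μ))
     - (((∫ x, (U1 x)^2 ∂μ) + ∫ x, (2*U1 x - U0 x)^2 ∂μ)/2
       + (lam/(2*ε*K)) * (((∫ x, (u1 x)^2 ∂μ) + ∫ x, (2*u1 x - u0 x)^2 ∂μ)/2)
       + (S₁/(2*ε^2)) * (∫ x, (φ1 x - φ0 x)^2 ∂μ)
       + (S₂/2) * (∫ x, ‖gφ1 x - gφ0 x‖^2 ∂μ))
     ≤ -δt * (∫ x, τs x * ((3*φ2 x - 4*φ1 x + φ0 x)/(2*δt))^2 ∂μ)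
        - δt * (lam*D/(ε*K)) * ∫ x, ‖gu2 x‖^2 ∂μ) ∧
    (-δt * (∫ x, τs x * ((3*φ2 x - 4*φ1 x + φ0 x)/(2*δt))^2 ∂μ)
        - δt * (lam*D/(ε*K)) * ∫ x, ‖gu2 x‖^2 ∂μ ≤ 0) :=
  sieq_unconditional_energy_stability_general μ d δt S₁ S₂ ε lam D K hδt hS₁ hS₂ hε hlam hD hK τs Zs
    ps hτ φ2 φ1 φ0 u2 u1 u0 U2 U1 U0 Lstab Lu2 gφ2 gφ1 gφ0 gu2 hφ2 hφ1 hφ0 hu2 hu1 hu0 hU2 hU1 hU0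
    hgφ2 hgφ1 hgφ0 hLs hLu heq1 heq2 heq3 hIBP1 hIBP2
end
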